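/- arXiv:math/0701600 — 4 statements merged into one kernel-verified Lean document; each statement's English description precedes it below -/
import Mathlib

section
/- Let z^(0) = (z_1,...,z_n) be a vector in [-1,1]^n with sum equal to 0. Define a sequence of vectors z^(r) as follows: given z^(r), let i be the first index achieving the minimum entry of z^(r) and let l be the first index achieving the maximum entry; z^(r+1) agrees with z^(r) except that both entries i and l are replaced by (z^(r)_i + z^(r)_l)/2. Then every entry of z^(n) lies in [-1/2, 1/2]. -/
/-- `i` is the first index achieving the minimum entry of `z`. -/
def isFirstMin {n : ℕ} (z : Fin n → ℝ) (i : Fin n) : Prop :=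
  (∀ j, z i ≤ z j) ∧ ∀ j, (∀ k, z j ≤ z k) → i ≤ j

/-- `l` is the first index achieving the maximum entry of `z`. -/
def isFirstMax {n : ℕ} (z : Fin n → ℝ) (l : Fin n) : Prop :=
  (∀ j, z j ≤ z l) ∧ ∀ j, (∀ k, z k ≤ z j) → l ≤ j

/-- One step of the averaging process: the first minimal entry and the first maximal
entry are both replaced by their mean, all other entries unchanged. -/
def avgStep {n : ℕ} (z z' : Fin n → ℝ) : Prop :=
  ∃ i l : Fin n, isFirstMin z i ∧ isFirstMax z l ∧
    z' i = (z i + z l) / 2 ∧ z' l = (z i + z l) / 2 ∧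
    ∀ j, j ≠ i → j ≠ l → z' j = z j

lemma avg_step_props {n : ℕ} {z z' : Fin n → ℝ}
    (hz : ∀ j, z j ∈ Set.Icc (-1:ℝ) 1) (hsum : ∑ j, z j = 0)
    (h : avgStep z z') :
    (∀ j, z' j ∈ Set.Icc (-1:ℝ) 1) ∧ (∑ j, z' j = 0) ∧
    (∀ j, 1/2 < z' j → 1/2 < z j) ∧
    ((∃ j, 1/2 < z j) → ∃ l, 1/2 < z l ∧ ¬ (1/2 < z' l)) ∧
    (∀ j, z' j < -(1/2) → z j < -(1/2)) ∧
    ((∃ j, z j < -(1/2)) → ∃ i, z i < -(1/2) ∧ ¬ (z' i < -(1/2))) := by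
  obtain ⟨i, l, ⟨hmin, _⟩, ⟨hmax, _⟩, hi, hl, hrest⟩ := h
  have hn : 0 < n := i.pos
  have hn' : (0:ℝ) < n := by exact_mod_cast hn
  have hzi : z i ≤ 0 := by
    have h1 : (n:ℝ) * z i ≤ ∑ j, z j := by
      calc (n:ℝ) * z i = ∑ _j : Fin n, z i := by simp [mul_comm]
      _ ≤ ∑ j, z j := Finset.sum_le_sum fun j _ => hmin j
    rw [hsum] at h1
    nlinarith
  have hzl : 0 ≤ z l := by
    have h1 : ∑ j, z j ≤ (n:ℝ) * z l := by
      calc ∑ j, z j ≤ ∑ _j : Fin n, z l := Finset.sum_le_sum fun j _ => hmax j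
      _ = (n:ℝ) * z l := by simp [mul_comm]
    rw [hsum] at h1
    nlinarith
  have hvle : (z i + z l)/2 ≤ 1/2 := by have := (hz l).2; linarith
  have hvge : -(1/2) ≤ (z i + z l)/2 := by have := (hz i).1; linarith
  refine ⟨?_, ?_, ?_, ?_, ?_, ?_⟩
  · intro j
    by_cases hji : j = i
    · subst hji; rw [hi]; constructor <;> linarith
    by_cases hjl : j = l
    · subst hjl; rw [hl]; constructor <;> linarith
    · rw [hrest j hji hjl]; exact hz j
  · by_cases hil : i = l
    · have hzz : z' = z := by
        funext j
        by_cases hji : j = i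
        · subst hji; rw [hi, ← hil]; ring
        · exact hrest j hji (hil ▸ hji)
      rw [hzz, hsum]
    · have key : ∑ j, (z' j - z j) = 0 := by
        have hsub : ({i, l} : Finset (Fin n)) ⊆ Finset.univ := Finset.subset_univ _
        rw [← Finset.sum_subset hsub (by
          intro x _ hx
          simp only [Finset.mem_insert, Finset.mem_singleton] at hx
          push_neg at hx
          rw [hrest x hx.1 hx.2]; ring)]
        rw [Finset.sum_pair hil, hi, hl]
        ring
      rw [Finset.sum_sub_distrib, hsum] at key
      linarith
  · intro j hj
    by_cases hji : j = i
    · subst hji; rw [hi] at hj; linarith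
    by_cases hjl : j = l
    · subst hjl; rw [hl] at hj; linarith
    · rwa [hrest j hji hjl] at hj
  · rintro ⟨j, hj⟩
    exact ⟨l, lt_of_lt_of_le hj (hmax j), by rw [hl]; push_neg; linarith⟩
  · intro j hj
    by_cases hji : j = i
    · subst hji; rw [hi] at hj; linarith
    by_cases hjl : j = l
    · subst hjl; rw [hl] at hj; linarith
    · rwa [hrest j hji hjl] at hj
  · rintro ⟨j, hj⟩
    exact ⟨i, lt_of_le_of_lt (hmin j) hj, by rw [hi]; push_neg; linarith⟩

theorem averaging_lemma {n : ℕ} (z : ℕ → Fin n → ℝ)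
    (h1 : ∀ j, z 0 j ∈ Set.Icc (-1 : ℝ) 1)
    (h2 : ∑ j, z 0 j = 0)
    (hstep : ∀ r, avgStep (z r) (z (r + 1))) :
    ∀ j, z n j ∈ Set.Icc (-(1/2) : ℝ) (1/2) := by
  have inv : ∀ r, (∀ j, z r j ∈ Set.Icc (-1:ℝ) 1) ∧ ∑ j, z r j = 0 := by
    intro r
    induction r with
    | zero => exact ⟨h1, h2⟩
    | succ r ih =>
      obtain ⟨hb, hs, _⟩ := avg_step_props ih.1 ih.2 (hstep r)
      exact ⟨hb, hs⟩
  set S : ℕ → Finset (Fin n) := fun r => Finset.univ.filter (fun j => 1/2 < z r j) with hS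
  set T : ℕ → Finset (Fin n) := fun r => Finset.univ.filter (fun j => z r j < -(1/2)) with hT
  have hScard : ∀ r, (S r).card ≤ n - r := by
    intro r
    induction r with
    | zero => simpa using Finset.card_le_univ (S 0)
    | succ r ih =>
      obtain ⟨_, _, hmono, hdrop, _, _⟩ := avg_step_props (inv r).1 (inv r).2 (hstep r)
      have hsub : S (r+1) ⊆ S r := by
        intro j hj
        simp only [hS, Finset.mem_filter, Finset.mem_univ, true_and] at hj ⊢
        exact hmono j hj
      by_cases hne : (S r).Nonempty
      · obtain ⟨j, hj⟩ := hne
        simp only [hS, Finset.mem_filter, Finset.mem_univ, true_and] at hj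
        obtain ⟨l, hl1, hl2⟩ := hdrop ⟨j, hj⟩
        have hlS : l ∈ S r := by
          simp only [hS, Finset.mem_filter, Finset.mem_univ, true_and]; exact hl1
        have hlS' : l ∉ S (r+1) := by
          simp only [hS, Finset.mem_filter, Finset.mem_univ, true_and]; exact hl2
        have hlt : (S (r+1)).card < (S r).card :=
          Finset.card_lt_card ((Finset.ssubset_iff_of_subset hsub).mpr ⟨l, hlS, hlS'⟩)
        omega
      · rw [Finset.not_nonempty_iff_eq_empty] at hne
        have : S (r+1) = ∅ := Finset.subset_empty.mp (hne ▸ hsub)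
        simp [this]
  have hTcard : ∀ r, (T r).card ≤ n - r := by
    intro r
    induction r with
    | zero => simpa using Finset.card_le_univ (T 0)
    | succ r ih =>
      obtain ⟨_, _, _, _, hmono, hdrop⟩ := avg_step_props (inv r).1 (inv r).2 (hstep r)
      have hsub : T (r+1) ⊆ T r := by
        intro j hj
        simp only [hT, Finset.mem_filter, Finset.mem_univ, true_and] at hj ⊢
        exact hmono j hj
      by_cases hne : (T r).Nonempty
      · obtain ⟨j, hj⟩ := hne
        simp only [hT, Finset.mem_filter, Finset.mem_univ, true_and] at hj
        obtain ⟨l, hl1, hl2⟩ := hdrop ⟨j, hj⟩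
        have hlT : l ∈ T r := by
          simp only [hT, Finset.mem_filter, Finset.mem_univ, true_and]; exact hl1
        have hlT' : l ∉ T (r+1) := by
          simp only [hT, Finset.mem_filter, Finset.mem_univ, true_and]; exact hl2
        have hlt : (T (r+1)).card < (T r).card :=
          Finset.card_lt_card ((Finset.ssubset_iff_of_subset hsub).mpr ⟨l, hlT, hlT'⟩)
        omega
      · rw [Finset.not_nonempty_iff_eq_empty] at hne
        have : T (r+1) = ∅ := Finset.subset_empty.mp (hne ▸ hsub)
        simp [this]
  intro j
  have hSn : S n = ∅ := by
    have := hScard n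
    rw [Nat.sub_self, Nat.le_zero] at this
    exact Finset.card_eq_zero.mp this
  have hTn : T n = ∅ := by
    have := hTcard n
    rw [Nat.sub_self, Nat.le_zero] at this
    exact Finset.card_eq_zero.mp this
  have h1' : j ∉ S n := by rw [hSn]; exact Finset.notMem_empty j
  have h2' : j ∉ T n := by rw [hTn]; exact Finset.notMem_empty j
  simp only [hS, Finset.mem_filter, Finset.mem_univ, true_and] at h1'
  simp only [hT, Finset.mem_filter, Finset.mem_univ, true_and] at h2'
  push_neg at h1' h2'
  exact ⟨h2', h1'⟩
end

section
/- In the averaging process of the previous lemma, if the vector z^(r) has at least one entry outside [-1/2,1/2], then z^(r+1) has strictly fewer entries outside [-1/2,1/2] than z^(r) does. -/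
/-!
Since the entries sum to zero, the minimal entry lies in `[-1, 0]` and the maximal one in `[0, 1]`,
so their mean lies in `[-1/2, 1/2]`. Only these two entries change, both into `[-1/2, 1/2]`, and if
any entry lies outside `[-1/2, 1/2]` then so does the minimum or the maximum.
-/

open Finset

section ExtremeEntries

variable {ι M : Type*} [Fintype ι] [AddCommMonoid M] [LinearOrder M] [IsOrderedCancelAddMonoid M]
  {z : ι → M}

theorem nonpos_of_forall_le_of_sum_eq_zero {i : ι} (hs : ∑ j, z j = 0) (hmin : ∀ j, z i ≤ z j) :
    z i ≤ 0 := by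
  have hsum : ∑ j, z j ≤ ∑ _j : ι, (0 : M) := by simp [hs]
  obtain ⟨j, -, hj⟩ := exists_le_of_sum_le (univ_nonempty_iff.2 ⟨i⟩) hsum
  exact (hmin j).trans hj

theorem nonneg_of_forall_le_of_sum_eq_zero {l : ι} (hs : ∑ j, z j = 0) (hmax : ∀ j, z j ≤ z l) :
    0 ≤ z l :=
  nonpos_of_forall_le_of_sum_eq_zero (M := Mᵒᵈ) hs hmax

end ExtremeEntries

theorem min_or_max_notMem_Icc {ι α : Type*} [LinearOrder α] {z : ι → α} {i l : ι} {a b : α}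
    (hmin : ∀ j, z i ≤ z j) (hmax : ∀ j, z j ≤ z l) (hout : ∃ j, z j ∉ Set.Icc a b) :
    z i ∉ Set.Icc a b ∨ z l ∉ Set.Icc a b := by
  obtain ⟨j, hj⟩ := hout
  rw [Set.mem_Icc, not_and_or, not_le, not_le] at hj
  rcases hj with hj | hj
  · exact .inl fun h => (h.1.trans (hmin j)).not_gt hj
  · exact .inr fun h => ((hmax j).trans h.2).not_gt hj

theorem add_div_two_mem_Icc {K : Type*} [Field K] [LinearOrder K] [IsStrictOrderedRing K]
    {a b : K} (ha : -1 ≤ a) (ha' : a ≤ 0) (hb : 0 ≤ b) (hb' : b ≤ 1) :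
    (a + b) / 2 ∈ Set.Icc (-(1 / 2)) (1 / 2) := by
  constructor <;> linarith

theorem card_filter_not_lt_of_eq_off_pair {ι α : Type*} [Fintype ι] {p : α → Prop}
    [DecidablePred p] {z z' : ι → α} {i l : ι} (hi : p (z' i)) (hl : p (z' l))
    (hother : ∀ j, j ≠ i → j ≠ l → z' j = z j) (hbad : ¬ p (z i) ∨ ¬ p (z l)) :
    #{j | ¬ p (z' j)} < #{j | ¬ p (z j)} := by
  have hsub : ∀ j, ¬ p (z' j) → ¬ p (z j) := by
    intro j hj
    by_cases hji : j = i
    · exact absurd (hji ▸ hi) hj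
    by_cases hjl : j = l
    · exact absurd (hjl ▸ hl) hj
    rwa [hother j hji hjl] at hj
  refine card_lt_card ((ssubset_iff_of_subset (monotone_filter_right _ fun j _ => hsub j)).2 ?_)
  rcases hbad with hbad | hbad
  · exact ⟨i, by simpa using hbad, by simpa using hi⟩
  · exact ⟨l, by simpa using hbad, by simpa using hl⟩

theorem averaging_step_decreases {n : ℕ} (z z' : Fin n → ℝ)
    (h1 : ∀ j, z j ∈ Set.Icc (-1 : ℝ) 1)
    (h2 : ∑ j, z j = 0)
    (hstep : avgStep z z')
    (hout : ∃ j, ¬ (-(1/2) ≤ z j ∧ z j ≤ (1/2 : ℝ))) :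
    (Finset.univ.filter fun j => ¬ (-(1/2) ≤ z' j ∧ z' j ≤ (1/2 : ℝ))).card <
      (Finset.univ.filter fun j => ¬ (-(1/2) ≤ z j ∧ z j ≤ (1/2 : ℝ))).card := by
  obtain ⟨i, l, hmin, hmax, hi, hl, hother⟩ := hstep
  have hmean : (z i + z l) / 2 ∈ Set.Icc (-(1 / 2)) (1 / 2) :=
    add_div_two_mem_Icc (h1 i).1 (nonpos_of_forall_le_of_sum_eq_zero h2 hmin.1)
      (nonneg_of_forall_le_of_sum_eq_zero h2 hmax.1) (h1 l).2
  exact card_filter_not_lt_of_eq_off_pair (p := (· ∈ Set.Icc (-(1 / 2) : ℝ) (1 / 2)))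
    (hi ▸ hmean) (hl ▸ hmean) hother (min_or_max_notMem_Icc hmin.1 hmax.1 hout)
end

section
/- For all real z and all A' with 0 \le A' \le 1/8, one has 0 \le 1 - 4A'(1 - cos z), and \sqrt{1 - 4A'(1-\cos z)} \le \exp(-A' z^2 + (1/12) A' z^4). -/
/-!
Since `1 - cos z = 2 sin² (z/2)`, the cubic Taylor bound `|x - sin x| ≤ |x|³/6` yields the
quartic bound `1 - cos z ≥ z²/2 - z⁴/24`. Combined with `√(1 - x) ≤ exp (-x/2)`, which is
`1 - x ≤ exp (-x)` under a square root, this gives the estimate.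
-/

open Real

namespace Real

lemma sq_sub_pow_four_div_three_le_sin_sq (x : ℝ) : x ^ 2 - x ^ 4 / 3 ≤ sin x ^ 2 := by
  rcases le_or_gt (|x| ^ 3 / 6) |x| with hsmall | hlarge
  · have hsin : |x| - |x| ^ 3 / 6 ≤ |sin x| := by
      linarith [abs_sub_sin_le x, abs_sub_abs_le_abs_sub x (sin x)]
    have hsq := pow_le_pow_left₀ (sub_nonneg.mpr hsmall) hsin 2
    rw [sq_abs] at hsq
    nlinarith [sq_abs x, sq_nonneg (|x| ^ 3)]
  · -- here `x² > 6`, so the left side is negative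
    nlinarith [sq_nonneg (sin x), sq_abs x, abs_nonneg x]

lemma cos_le_one_sub_sq_div_two_add_pow_four_div_24 (x : ℝ) :
    cos x ≤ 1 - x ^ 2 / 2 + x ^ 4 / 24 := by
  have h := sq_sub_pow_four_div_three_le_sin_sq (x / 2)
  rw [sin_sq_eq_half_sub, mul_div_cancel₀ x two_ne_zero] at h
  linarith

lemma sqrt_one_sub_le_exp_neg_half (x : ℝ) : √(1 - x) ≤ exp (-x / 2) := by
  rw [exp_half]
  exact sqrt_le_sqrt (by linarith [add_one_le_exp (-x)])

end Real

theorem sqrt_integrand_bound (z A' : ℝ) (h0 : 0 ≤ A') (h8 : A' ≤ 1/8) :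
    0 ≤ 1 - 4 * A' * (1 - Real.cos z) ∧
    Real.sqrt (1 - 4 * A' * (1 - Real.cos z)) ≤
      Real.exp (-A' * z ^ 2 + (1/12) * A' * z ^ 4) := by
  have hcos : 0 ≤ 1 - cos z := sub_nonneg.mpr (cos_le_one z)
  refine ⟨by nlinarith [neg_one_le_cos z], ?_⟩
  calc √(1 - 4 * A' * (1 - cos z))
      ≤ exp (-(4 * A' * (1 - cos z)) / 2) := sqrt_one_sub_le_exp_neg_half _
    _ ≤ exp (-A' * z ^ 2 + (1/12) * A' * z ^ 4) := by
      gcongr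
      nlinarith [cos_le_one_sub_sq_div_two_add_pow_four_div_24 z]
end

section
/- For every real c > 0, \int_{-8\pi/75}^{8\pi/75} \exp(c(-x^2 + (7/3)x^4)) dx \le \sqrt{\pi/c} \, e^{3/c}. -/
/-! Substitute `x = sinh (b y) / b` with `b = √12`. Near the origin `arsinh` is flat enough that
`(arsinh (b x) / b) ^ 2 ≤ x ^ 2 - (7/3) x ^ 4` on `|x| ≤ 0.336`, so the integrand is at most
`exp (-c y ^ 2)`, while the Jacobian contributes `cosh (b y)`. Bounding the integral over `y` by the
one over the whole line leaves `∫ cosh (b y) exp (-c y ^ 2) dy = √(π / c) exp (b ^ 2 / (4 c))`,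
and `b ^ 2 / 4 = 3`. -/

open Real MeasureTheory

namespace Real

lemma add_pow_three_div_six_le_sinh {v : ℝ} (hv : 0 ≤ v) : v + v ^ 3 / 6 ≤ sinh v := by
  have h := sum_le_hasSum (Finset.range 2) (fun n _ => by positivity) (hasSum_sinh v)
  norm_num [Finset.sum_range_succ, Nat.factorial] at h
  linarith

lemma abs_arsinh (x : ℝ) : |arsinh x| = arsinh |x| := by
  rcases le_total 0 x with hx | hx
  · rw [abs_of_nonneg hx, abs_of_nonneg (arsinh_nonneg_iff.2 hx)]
  · rw [abs_of_nonpos hx, abs_of_nonpos (arsinh_nonpos_iff.2 hx), arsinh_neg]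

lemma sq_arsinh_sqrt_twelve_mul_div_le {x : ℝ} (hx : |x| ≤ 0.336) :
    (arsinh (√12 * x) / √12) ^ 2 ≤ x ^ 2 - 7 / 3 * x ^ 4 := by
  have hx2 : x ^ 2 ≤ 0.1129 := by
    rw [← sq_abs]; nlinarith [abs_nonneg x]
  have hw : 0 ≤ 12 * x ^ 2 - 28 * x ^ 4 := by nlinarith [sq_nonneg x]
  set v := √(12 * x ^ 2 - 28 * x ^ 4)
  have hv2 : v ^ 2 = 12 * x ^ 2 - 28 * x ^ 4 := sq_sqrt hw
  have hv : 0 ≤ v := sqrt_nonneg _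
  have h12 : √12 ^ 2 = 12 := sq_sqrt (by norm_num)
  have hpoly : (√12 * |x|) ^ 2 ≤ (v + v ^ 3 / 6) ^ 2 := by
    have : (v + v ^ 3 / 6) ^ 2 = v ^ 2 + (v ^ 2) ^ 2 / 3 + (v ^ 2) ^ 3 / 36 := by ring
    rw [this, hv2, mul_pow, h12, sq_abs]
    nlinarith [mul_nonneg (pow_nonneg (sq_nonneg x) 2) (sub_nonneg.2 hx2),
      mul_nonneg (pow_nonneg (sq_nonneg x) 3) (sub_nonneg.2 hx2)]
  have hle : arsinh (√12 * |x|) ≤ v := by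
    rw [← arsinh_sinh v, arsinh_le_arsinh]
    exact (abs_le_of_sq_le_sq' hpoly (by positivity)).2.trans (add_pow_three_div_six_le_sinh hv)
  have habs : |arsinh (√12 * x)| ≤ v := by
    rwa [abs_arsinh, abs_mul, abs_of_pos (by positivity : (0:ℝ) < √12)]
  rw [div_pow, h12, div_le_iff₀ (by norm_num), ← sq_abs]
  nlinarith [abs_nonneg (arsinh (√12 * x))]

end Real

lemma exp_neg_mul_sq_add_mul {c : ℝ} (hc : c ≠ 0) (b y : ℝ) :
    exp (-c * y ^ 2 + b * y) = exp (b ^ 2 / (4 * c)) * exp (-c * (y - b / (2 * c)) ^ 2) := by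
  rw [← exp_add]
  congr 1
  field_simp
  ring

lemma integrable_exp_neg_mul_sq_add_mul {c : ℝ} (hc : 0 < c) (b : ℝ) :
    Integrable fun y : ℝ => exp (-c * y ^ 2 + b * y) := by
  simp_rw [exp_neg_mul_sq_add_mul hc.ne']
  exact ((integrable_exp_neg_mul_sq hc).comp_sub_right _).const_mul _

lemma integral_exp_neg_mul_sq_add_mul {c : ℝ} (hc : 0 < c) (b : ℝ) :
    ∫ y : ℝ, exp (-c * y ^ 2 + b * y) = √(π / c) * exp (b ^ 2 / (4 * c)) := by
  simp_rw [exp_neg_mul_sq_add_mul hc.ne']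
  rw [integral_const_mul, integral_sub_right_eq_self (fun y => exp (-c * y ^ 2)),
    integral_gaussian, mul_comm]

lemma cosh_mul_mul_exp_neg_mul_sq (b c y : ℝ) :
    cosh (b * y) * exp (-c * y ^ 2) =
      (exp (-c * y ^ 2 + b * y) + exp (-c * y ^ 2 + -b * y)) / 2 := by
  rw [cosh_eq, exp_add, exp_add, neg_mul, neg_mul]
  ring

lemma integrable_cosh_mul_mul_exp_neg_mul_sq {c : ℝ} (hc : 0 < c) (b : ℝ) :
    Integrable fun y : ℝ => cosh (b * y) * exp (-c * y ^ 2) := by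
  simp_rw [cosh_mul_mul_exp_neg_mul_sq]
  exact ((integrable_exp_neg_mul_sq_add_mul hc b).add
    (integrable_exp_neg_mul_sq_add_mul hc (-b))).div_const 2

lemma integral_cosh_mul_mul_exp_neg_mul_sq {c : ℝ} (hc : 0 < c) (b : ℝ) :
    ∫ y : ℝ, cosh (b * y) * exp (-c * y ^ 2) = √(π / c) * exp (b ^ 2 / (4 * c)) := by
  simp_rw [cosh_mul_mul_exp_neg_mul_sq]
  rw [integral_div, integral_add (integrable_exp_neg_mul_sq_add_mul hc b)
    (integrable_exp_neg_mul_sq_add_mul hc (-b)), integral_exp_neg_mul_sq_add_mul hc,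
    integral_exp_neg_mul_sq_add_mul hc, neg_sq]
  ring

lemma intervalIntegral_le_integral_of_nonneg {g : ℝ → ℝ} (hg0 : 0 ≤ g) (hg : Integrable g)
    (u v : ℝ) : ∫ y in u..v, g y ≤ ∫ y, g y :=
  calc ∫ y in u..v, g y ≤ ‖∫ y in u..v, g y‖ := le_norm_self _
    _ ≤ ∫ y in Set.uIoc u v, ‖g y‖ := intervalIntegral.norm_integral_le_integral_norm_uIoc
    _ ≤ ∫ y, ‖g y‖ := setIntegral_le_integral hg.norm (ae_of_all _ fun _ => norm_nonneg _)
    _ = ∫ y, g y := by simp_rw [norm_of_nonneg (hg0 _)]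

lemma integral_exp_neg_mul_sq_arsinh_le {c b : ℝ} (hc : 0 < c) (hb : b ≠ 0) (s t : ℝ) :
    ∫ x in s..t, exp (-c * (arsinh (b * x) / b) ^ 2) ≤ √(π / c) * exp (b ^ 2 / (4 * c)) := by
  set g : ℝ → ℝ := fun y => cosh (b * y) * exp (-c * y ^ 2)
  have hderiv (x : ℝ) :
      HasDerivAt (fun x => arsinh (b * x) / b) (√(1 + (b * x) ^ 2))⁻¹ x := by
    refine ((((hasDerivAt_id' x).const_mul b).arsinh).div_const b).congr_deriv ?_
    simp only [smul_eq_mul]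
    field_simp
  have hjac (x : ℝ) :
      exp (-c * (arsinh (b * x) / b) ^ 2) =
        (g ∘ fun x => arsinh (b * x) / b) x * (√(1 + (b * x) ^ 2))⁻¹ := by
    simp only [g, Function.comp, mul_div_cancel₀ _ hb, cosh_arsinh]
    have : 0 < √(1 + (b * x) ^ 2) := by positivity
    field_simp
  simp_rw [hjac]
  rw [intervalIntegral.integral_comp_mul_deriv (fun x _ => hderiv x)
      (Continuous.continuousOn (by fun_prop (disch := intro; positivity))) (by fun_prop),
    ← integral_cosh_mul_mul_exp_neg_mul_sq hc b]
  exact intervalIntegral_le_integral_of_nonneg (fun y => by positivity)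
    (integrable_cosh_mul_mul_exp_neg_mul_sq hc b) _ _

theorem gaussian_type_integral_bound (c : ℝ) (hc : 0 < c) :
    ∫ x in (-(8 * Real.pi / 75))..(8 * Real.pi / 75),
        Real.exp (c * (-x ^ 2 + (7/3) * x ^ 4)) ≤
      Real.sqrt (Real.pi / c) * Real.exp (3 / c) := by
  have ha : 8 * π / 75 ≤ 0.336 := by linarith [pi_lt_d2]
  have hpoint : ∀ x ∈ Set.Icc (-(8 * π / 75)) (8 * π / 75),
      exp (c * (-x ^ 2 + 7 / 3 * x ^ 4)) ≤ exp (-c * (arsinh (√12 * x) / √12) ^ 2) := by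
    intro x hx
    have hsq := sq_arsinh_sqrt_twelve_mul_div_le ((abs_le.2 hx).trans ha)
    rw [exp_le_exp]
    nlinarith [mul_le_mul_of_nonneg_left hsq hc.le]
  have hcont : Continuous fun x => exp (-c * (arsinh (√12 * x) / √12) ^ 2) :=
    ((((continuous_const_mul _).arsinh.div_const _).pow 2).const_mul _).rexp
  calc _ ≤ ∫ x in (-(8 * π / 75))..(8 * π / 75),
          exp (-c * (arsinh (√12 * x) / √12) ^ 2) :=
        intervalIntegral.integral_mono_on (by linarith [pi_pos])
          (Continuous.intervalIntegrable (by fun_prop) _ _)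
          (hcont.intervalIntegrable _ _) hpoint
    _ ≤ √(π / c) * exp (√12 ^ 2 / (4 * c)) :=
        integral_exp_neg_mul_sq_arsinh_le hc (by positivity) _ _
    _ = √(π / c) * exp (3 / c) := by
        rw [sq_sqrt (by norm_num)]
        congr 2
        ring
end
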